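/- arXiv:2506.16987 — 2 statements merged into one kernel-verified Lean document; each statement's English description precedes it below -/
import Mathlib

section
/- Let n, m, p ∈ ℕ, let A be a real n×n matrix, B a real n×m matrix, K a real m×n matrix, L a real n×p matrix, and C a real p×n matrix. Let M be the 2n×2n block matrix with blocks M₁₁ = A, M₁₂ = BK, M₂₁ = LC, M₂₂ = A + BK − LC. Then the characteristic polynomial of M equals the product of the characteristic polynomial of A + BK and the characteristic polynomial of A − LC. -/
open Matrix Polynomial

lemma charpoly_conj_involution {n : Type*} [DecidableEq n] [Fintype n]
    {R : Type*} [CommRing R] (T M : Matrix n n R) (hT : T * T = 1) :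
    (T * M * T).charpoly = M.charpoly := by
  have hT' : (T.map (C : R → R[X])) * (T.map C) = 1 := by
    rw [← Matrix.map_mul, hT]
    simp
  have hcm : charmatrix (T * M * T)
      = (T.map C) * charmatrix M * (T.map C) := by
    unfold charmatrix
    rw [Matrix.mul_sub, Matrix.sub_mul]
    congr 1
    · rw [Matrix.mul_assoc,
        (Matrix.scalar_commute (X : R[X]) (fun r' => Commute.all _ _) (T.map C)).eq,
        ← Matrix.mul_assoc, hT', Matrix.one_mul]
    · simp only [RingHom.mapMatrix_apply, Matrix.map_mul]
  have : (T * M * T).charpoly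
      = ((T.map C) * charmatrix M * (T.map C)).det := by
    rw [Matrix.charpoly, hcm]
  rw [this, Matrix.det_mul, Matrix.det_mul]
  have hdet : (T.map (C : R → R[X])).det *
      (T.map C).det = 1 := by
    rw [← Matrix.det_mul, hT', Matrix.det_one]
  calc (T.map C).det * (charmatrix M).det * (T.map C).det
      = (T.map C).det * (T.map C).det * (charmatrix M).det := by ring
    _ = (charmatrix M).det := by rw [hdet, one_mul]
    _ = M.charpoly := rfl

/-- Separation principle (spectral form): the characteristic polynomial of the coupled
controller–estimator matrix `[A, BK; LC, A + BK − LC]` factors as the product of the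
characteristic polynomials of `A + BK` and `A − LC`. -/
theorem separation_principle_charpoly
    (n m p : ℕ)
    (A : Matrix (Fin n) (Fin n) ℝ)
    (B : Matrix (Fin n) (Fin m) ℝ)
    (K : Matrix (Fin m) (Fin n) ℝ)
    (L : Matrix (Fin n) (Fin p) ℝ)
    (C : Matrix (Fin p) (Fin n) ℝ) :
    (Matrix.fromBlocks A (B * K) (L * C) (A + B * K - L * C)).charpoly
      = (A + B * K).charpoly * (A - L * C).charpoly := by
  set M := Matrix.fromBlocks A (B * K) (L * C) (A + B * K - L * C)
  set T : Matrix (Fin n ⊕ Fin n) (Fin n ⊕ Fin n) ℝ :=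
    Matrix.fromBlocks 1 0 1 (-1)
  have hT : T * T = 1 := by
    simp [T, Matrix.fromBlocks_multiply, ← Matrix.fromBlocks_one]
  have hconj : T * M * T
      = Matrix.fromBlocks (A + B * K) (-(B * K)) 0 (A - L * C) := by
    simp only [T, M, Matrix.fromBlocks_multiply]
    ext i j
    rcases i with i|i <;> rcases j with j|j <;>
      simp [Matrix.add_apply, Matrix.sub_apply, Matrix.neg_apply] <;> ring
  have h1 : (T * M * T).charpoly = M.charpoly :=
    charpoly_conj_involution T M hT
  have h2 : M.charpoly
      = (Matrix.fromBlocks (A + B * K) (-(B * K)) 0 (A - L * C)).charpoly := by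
    rw [← h1, hconj]
  rw [h2, Matrix.charpoly_fromBlocks_zero₂₁]
end

section
/- Let n, m, p ∈ ℕ, let A be a real n×n matrix, B a real n×m matrix, K a real m×n matrix, L a real n×p matrix, and C a real p×n matrix. Assume every complex root of the characteristic polynomial of A + BK has negative real part, and every complex root of the characteristic polynomial of A − LC has negative real part. Suppose x, z : ℝ → ℝⁿ are differentiable and satisfy ẋ(t) = A x(t) + B K z(t) and ż(t) = A z(t) + B K z(t) + L (C x(t) − C z(t)) for all t ≥ 0. Then x(t) → 0 and z(t) → 0 as t → ∞. -/
/-!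
With `e = x - z` the pair `(x, e)` solves `w' = M w` for the block upper-triangular matrix
`M = [[A + BK, -BK], [0, A - LC]]`, whose characteristic polynomial is the product of those of
`A + BK` and `A - LC`; so `M` is Hurwitz. By uniqueness of solutions, `w t = exp (t • M) *ᵥ w 0`.
After complexifying, `w 0` splits into generalized eigenvectors of `M`, and on one for the
eigenvalue `μ` the exponential acts as `e^{tμ}` times a polynomial in `t`, which decays
since `Re μ < 0`.
-/

open Matrix Filter NormedSpace
open scoped Topology Nat

theorem HasDerivAt.sumElim {𝕜 E ι κ : Type*} [NontriviallyNormedField 𝕜] [NormedAddCommGroup E]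
    [NormedSpace 𝕜 E] [Fintype ι] [Fintype κ] {f : 𝕜 → ι → E} {g : 𝕜 → κ → E}
    {f' : ι → E} {g' : κ → E} {t : 𝕜} (hf : HasDerivAt f f' t) (hg : HasDerivAt g g' t) :
    HasDerivAt (fun s => Sum.elim (f s) (g s)) (Sum.elim f' g') t := by
  rw [hasDerivAt_pi] at hf hg ⊢
  rintro (i | i)
  exacts [hf i, hg i]

theorem tendsto_sumElim_nhds {α X ι κ : Type*} [TopologicalSpace X] {l : Filter α}
    {f : α → ι → X} {g : α → κ → X} {a : ι → X} {b : κ → X} :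
    Tendsto (fun s => Sum.elim (f s) (g s)) l (𝓝 (Sum.elim a b)) ↔
      Tendsto f l (𝓝 a) ∧ Tendsto g l (𝓝 b) := by
  simp [tendsto_pi_nhds, Sum.forall]

theorem tendsto_pow_mul_cexp_mul_atTop_nhds_zero {μ : ℂ} (hμ : μ.re < 0) (j : ℕ) :
    Tendsto (fun t : ℝ => (t : ℂ) ^ j * Complex.exp (t * μ)) atTop (𝓝 0) := by
  rw [tendsto_zero_iff_norm_tendsto_zero]
  refine (tendsto_rpow_mul_exp_neg_mul_atTop_nhds_zero j (-μ.re) (by linarith)).congr' ?_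
  filter_upwards [eventually_ge_atTop 0] with t ht
  simp [Complex.norm_exp, abs_of_nonneg ht, mul_comm]

namespace Matrix

variable {ι : Type*} [Fintype ι] [DecidableEq ι]

theorem pow_mulVec_eq_zero_of_le {R : Type*} [Semiring R] {N : Matrix ι ι R} {w : ι → R}
    {k j : ℕ} (hk : N ^ k *ᵥ w = 0) (hkj : k ≤ j) : N ^ j *ᵥ w = 0 := by
  rw [← Nat.sub_add_cancel hkj, pow_add, ← mulVec_mulVec, hk, mulVec_zero]

theorem exp_mulVec_eq_sum_of_pow_mulVec_eq_zero {𝕂 : Type*} [RCLike 𝕂] {N : Matrix ι ι 𝕂}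
    {w : ι → 𝕂} {k : ℕ} (hk : N ^ k *ᵥ w = 0) :
    exp N *ᵥ w = ∑ j ∈ Finset.range k, (j ! : 𝕂)⁻¹ • (N ^ j *ᵥ w) := by
  have hsum : HasSum (fun j => (j ! : 𝕂)⁻¹ • (N ^ j *ᵥ w)) (exp N *ᵥ w) := by
    open scoped Norms.Operator in
    have := (exp_series_hasSum_exp' (𝕂 := 𝕂) N).map (mulVec.addMonoidHomLeft w)
      (continuous_id.matrix_mulVec continuous_const)
    simp only [← smul_mulVec]
    exact this
  refine hsum.unique (hasSum_sum_of_ne_finset_zero fun j hj => ?_)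
  rw [pow_mulVec_eq_zero_of_le hk (by simpa using hj), smul_zero]

theorem exp_algebraMap (c : ℂ) : exp (algebraMap ℂ (Matrix ι ι ℂ) c) = Complex.exp c • 1 := by
  rw [algebraMap_eq_diagonal, exp_diagonal, Pi.exp_def, smul_one_eq_diagonal, Complex.exp_eq_exp_ℂ]
  rfl

theorem exp_smul_mulVec_eq_sum_of_pow_sub_mulVec_eq_zero {M : Matrix ι ι ℂ} {μ : ℂ} {w : ι → ℂ}
    {k : ℕ} (hk : (M - μ • 1) ^ k *ᵥ w = 0) (t : ℂ) :
    exp (t • M) *ᵥ w =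
      ∑ j ∈ Finset.range k, (t ^ j * Complex.exp (t * μ) / j !) • ((M - μ • 1) ^ j *ᵥ w) := by
  set N := M - μ • 1
  have hsplit : t • M = algebraMap ℂ _ (t * μ) + t • N := by
    simp [N, Algebra.algebraMap_eq_smul_one, smul_sub, smul_smul]
  have hexp : exp (t • M) = Complex.exp (t * μ) • exp (t • N) := by
    rw [hsplit, Matrix.exp_add_of_commute _ _ (Algebra.commute_algebraMap_left _ _),
      exp_algebraMap, smul_mul_assoc, one_mul]
  have htN : (t • N) ^ k *ᵥ w = 0 := by rw [smul_pow, smul_mulVec, hk, smul_zero]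
  rw [hexp, smul_mulVec, exp_mulVec_eq_sum_of_pow_mulVec_eq_zero htN, Finset.smul_sum]
  refine Finset.sum_congr rfl fun j _ => ?_
  rw [smul_pow, smul_mulVec, smul_smul, smul_smul]
  ring_nf

theorem exp_map_algebraMap {𝕜 : Type*} [RCLike 𝕜] (M : Matrix ι ι ℝ) :
    exp (M.map (algebraMap ℝ 𝕜)) = (exp M).map (algebraMap ℝ 𝕜) := by
  open scoped Norms.Operator in
  exact (map_exp (algebraMap ℝ 𝕜).mapMatrix
    (continuous_id.matrix_map (continuous_algebraMap ℝ 𝕜)) M).symm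

def IsHurwitz {R : Type*} [CommRing R] [Algebra R ℂ] (M : Matrix ι ι R) : Prop :=
  ∀ μ : ℂ, (M.charpoly.map (algebraMap R ℂ)).IsRoot μ → μ.re < 0

theorem IsHurwitz.fromBlocks_zero₂₁ {κ : Type*} [Fintype κ] [DecidableEq κ]
    {R : Type*} [CommRing R] [Algebra R ℂ] {A : Matrix ι ι R} {D : Matrix κ κ R}
    (hA : A.IsHurwitz) (hD : D.IsHurwitz) (B : Matrix ι κ R) :
    (fromBlocks A B 0 D).IsHurwitz := by
  intro μ hμ
  rw [charpoly_fromBlocks_zero₂₁, Polynomial.map_mul, Polynomial.root_mul] at hμ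
  exact hμ.elim (hA μ) (hD μ)

theorem IsHurwitz.map_complex {M : Matrix ι ι ℝ} (hM : M.IsHurwitz) :
    (M.map (algebraMap ℝ ℂ)).IsHurwitz := by
  intro μ hμ
  rw [Algebra.algebraMap_self, Polynomial.map_id, charpoly_map] at hμ
  exact hM μ hμ

theorem isRoot_charpoly_of_mem_maxGenEigenspace {K : Type*} [Field K] {M : Matrix ι ι K} {μ : K}
    {w : ι → K} (hw : w ∈ Module.End.maxGenEigenspace (toLin' M) μ) (hw0 : w ≠ 0) :
    M.charpoly.IsRoot μ := by
  have hμ : Module.End.HasEigenvalue (toLin' M) μ :=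
    Module.End.HasUnifEigenvalue.lt zero_lt_one ((Submodule.ne_bot_iff _).2 ⟨w, hw, hw0⟩)
  simpa using (Module.End.hasEigenvalue_iff_isRoot_charpoly _ _).1 hμ

theorem tendsto_exp_ofReal_smul_mulVec_of_mem_maxGenEigenspace {M : Matrix ι ι ℂ} {μ : ℂ}
    (hμ : μ.re < 0) {w : ι → ℂ} (hw : w ∈ Module.End.maxGenEigenspace (toLin' M) μ) :
    Tendsto (fun t : ℝ => exp ((t : ℂ) • M) *ᵥ w) atTop (𝓝 0) := by
  obtain ⟨k, hk⟩ := (Module.End.mem_maxGenEigenspace _ _ _).1 hw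
  have hk' : (M - μ • 1) ^ k *ᵥ w = 0 := by
    simpa [← toLin'_apply, map_sub, Module.End.one_eq_id] using hk
  simp_rw [exp_smul_mulVec_eq_sum_of_pow_sub_mulVec_eq_zero hk']
  simpa using tendsto_finsetSum _ fun j _ =>
    ((tendsto_pow_mul_cexp_mul_atTop_nhds_zero hμ j).div_const _).smul_const
      ((M - μ • 1) ^ j *ᵥ w)

theorem IsHurwitz.tendsto_exp_ofReal_smul_mulVec {M : Matrix ι ι ℂ} (hM : M.IsHurwitz)
    (v : ι → ℂ) : Tendsto (fun t : ℝ => exp ((t : ℂ) • M) *ᵥ v) atTop (𝓝 0) := by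
  have hv : v ∈ ⨆ μ, Module.End.maxGenEigenspace (toLin' M) μ := by
    rw [Module.End.iSup_maxGenEigenspace_eq_top]; trivial
  refine Submodule.iSup_induction _
    (motive := fun v => Tendsto (fun t : ℝ => exp ((t : ℂ) • M) *ᵥ v) atTop (𝓝 0)) hv ?_ ?_ ?_
  · intro μ w hw
    obtain rfl | hw0 := eq_or_ne w 0
    · simp
    exact tendsto_exp_ofReal_smul_mulVec_of_mem_maxGenEigenspace
      (hM μ (by simpa using isRoot_charpoly_of_mem_maxGenEigenspace hw hw0)) hw
  · simp
  · intro a b ha hb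
    simpa [mulVec_add] using ha.add hb

theorem IsHurwitz.tendsto_exp_smul_mulVec {M : Matrix ι ι ℝ} (hM : M.IsHurwitz) (v : ι → ℝ) :
    Tendsto (fun t : ℝ => exp (t • M) *ᵥ v) atTop (𝓝 0) := by
  have hc := hM.map_complex.tendsto_exp_ofReal_smul_mulVec (algebraMap ℝ ℂ ∘ v)
  have hcomplexify : ∀ t : ℝ, exp ((t : ℂ) • M.map (algebraMap ℝ ℂ)) *ᵥ (algebraMap ℝ ℂ ∘ v) =
      algebraMap ℝ ℂ ∘ (exp (t • M) *ᵥ v) := fun t => by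
    have hsmul : (t : ℂ) • M.map (algebraMap ℝ ℂ) = (t • M).map (algebraMap ℝ ℂ) := by
      ext; simp
    ext i
    rw [hsmul, exp_map_algebraMap, ← RingHom.map_mulVec]
    rfl
  simp_rw [hcomplexify] at hc
  rw [tendsto_pi_nhds] at hc ⊢
  exact fun i => tendsto_ofReal_iff.1 (by simpa using hc i)

theorem hasDerivAt_exp_smul_mulVec {𝕂 : Type*} [RCLike 𝕂] (M : Matrix ι ι 𝕂) (v : ι → 𝕂)
    (t : 𝕂) : HasDerivAt (fun s : 𝕂 => exp (s • M) *ᵥ v) (M *ᵥ (exp (t • M) *ᵥ v)) t := by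
  open scoped Norms.Operator in
  have := ((mulVecBilin 𝕂 𝕂).flip v).toContinuousLinearMap.hasFDerivAt.comp_hasDerivAt t
    (hasDerivAt_exp_smul_const' M t)
  rw [mulVec_mulVec]
  exact this

theorem eq_exp_smul_mulVec_of_hasDerivAt {M : Matrix ι ι ℝ} {w : ℝ → ι → ℝ}
    (hw : ∀ t, 0 ≤ t → HasDerivAt w (M *ᵥ w t) t) {t : ℝ} (ht : 0 ≤ t) :
    w t = exp (t • M) *ᵥ w 0 := by
  have hlip : LipschitzWith _ (fun y : ι → ℝ => M *ᵥ y) :=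
    (LinearMap.toContinuousLinearMap (mulVecLin M)).lipschitz
  refine ODE_solution_unique_of_mem_Icc_right (v := fun _ y => M *ᵥ y) (s := fun _ => Set.univ)
    (fun _ _ => hlip.lipschitzOnWith)
    (fun s hs => (hw s hs.1).continuousAt.continuousWithinAt)
    (fun s hs => (hw s hs.1).hasDerivWithinAt) (fun _ _ => trivial)
    (fun s _ => (hasDerivAt_exp_smul_mulVec M _ s).continuousAt.continuousWithinAt)
    (fun s _ => (hasDerivAt_exp_smul_mulVec M _ s).hasDerivWithinAt) (fun _ _ => trivial)
    (by simp) ⟨ht, le_rfl⟩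

theorem IsHurwitz.tendsto_of_hasDerivAt {M : Matrix ι ι ℝ} (hM : M.IsHurwitz)
    {w : ℝ → ι → ℝ} (hw : ∀ t, 0 ≤ t → HasDerivAt w (M *ᵥ w t) t) :
    Tendsto w atTop (𝓝 0) :=
  (hM.tendsto_exp_smul_mulVec (w 0)).congr' <| by
    filter_upwards [eventually_ge_atTop 0] with t ht
    exact (eq_exp_smul_mulVec_of_hasDerivAt hw ht).symm

end Matrix

/-- Separation principle (asymptotic form): if `A + BK` and `A − LC` are Hurwitz
(all complex roots of their characteristic polynomials have negative real part),
then the coupled controller–estimator trajectories `x` and `z` both tend to `0`. -/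
theorem separation_principle_stability
    (n m p : ℕ)
    (A : Matrix (Fin n) (Fin n) ℝ)
    (B : Matrix (Fin n) (Fin m) ℝ)
    (K : Matrix (Fin m) (Fin n) ℝ)
    (L : Matrix (Fin n) (Fin p) ℝ)
    (C : Matrix (Fin p) (Fin n) ℝ)
    (hK : ∀ μ : ℂ, ((A + B * K).charpoly.map (algebraMap ℝ ℂ)).IsRoot μ → μ.re < 0)
    (hL : ∀ μ : ℂ, ((A - L * C).charpoly.map (algebraMap ℝ ℂ)).IsRoot μ → μ.re < 0)
    (x z : ℝ → Fin n → ℝ)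
    (hx : ∀ t : ℝ, 0 ≤ t →
      HasDerivAt x (A.mulVec (x t) + B.mulVec (K.mulVec (z t))) t)
    (hz : ∀ t : ℝ, 0 ≤ t →
      HasDerivAt z
        (A.mulVec (z t) + B.mulVec (K.mulVec (z t))
          + L.mulVec (C.mulVec (x t) - C.mulVec (z t))) t) :
    Tendsto x atTop (nhds 0) ∧ Tendsto z atTop (nhds 0) := by
  have he : ∀ t, 0 ≤ t → HasDerivAt (fun t => x t - z t) ((A - L * C) *ᵥ (x t - z t)) t := by
    intro t ht
    refine ((hx t ht).sub (hz t ht)).congr_deriv ?_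
    simp only [sub_mulVec, mulVec_sub, mulVec_mulVec]
    abel
  have hxe : ∀ t, 0 ≤ t → HasDerivAt (fun t => Sum.elim (x t) (x t - z t))
      (fromBlocks (A + B * K) (-(B * K)) 0 (A - L * C) *ᵥ Sum.elim (x t) (x t - z t)) t := by
    intro t ht
    refine ((hx t ht).sumElim (he t ht)).congr_deriv ?_
    simp only [fromBlocks_mulVec, Sum.elim_comp_inl, Sum.elim_comp_inr, zero_mulVec, zero_add,
      add_mulVec, neg_mulVec, mulVec_sub, mulVec_mulVec]
    congr 1
    abel
  have hlim := (IsHurwitz.fromBlocks_zero₂₁ hK hL _).tendsto_of_hasDerivAt hxe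
  rw [← Sum.elim_zero_zero, tendsto_sumElim_nhds] at hlim
  exact ⟨hlim.1, by simpa using hlim.1.sub hlim.2⟩
end
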